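/- For every x > 0, 1/(2x) − 1/(12x²) < ψ(x + 1) − ln x < 1/(2x). -/

import Mathlib

open Real Filter Set

/-- The digamma (psi) function: the logarithmic derivative of the gamma function. -/
noncomputable def psi (x : ℝ) : ℝ := deriv (fun t : ℝ => Real.log (Real.Gamma t)) x

/-!
Write `F x = ψ(x + 1) - log x`. Since `ψ(x + 2) = ψ(x + 1) + 1/(x + 1)`, the difference
`F x - F (x + 1)` equals `log (1 + 1/x) - 1/(x + 1)`, so the two elementary estimates
`1/(2x) + 1/(2(x+1)) - 1/(12x²) + 1/(12(x+1)²) < log (1 + 1/x) < 1/(2x) + 1/(2(x+1))`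
(each the positivity of a function with negative derivative that tends to `0`) say exactly that
`F x - 1/(2x)` and `1/(2x) - 1/(12x²) - F x` strictly increase under `x ↦ x + 1`.
Log-convexity of `Γ` squeezes `ψ(x + 1)` between `log x` and `log (x + 1)`, so both tend to `0`
at infinity, and are therefore negative.
-/

open Topology

lemma neg_of_lt_add_one_of_tendsto {φ : ℝ → ℝ} (hφ : ∀ t, 0 < t → φ t < φ (t + 1))
    (hlim : Tendsto φ atTop (𝓝 0)) {t : ℝ} (ht : 0 < t) : φ t < 0 := by
  have hmono : ∀ n : ℕ, φ (t + 1) ≤ φ (t + 1 + n) := by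
    intro n
    induction n with
    | zero => simp
    | succ n ih =>
      push_cast
      rw [← add_assoc]
      exact ih.trans (hφ _ (by positivity)).le
  have hshift : Tendsto (fun n : ℕ => φ (t + 1 + n)) atTop (𝓝 0) :=
    hlim.comp (tendsto_atTop_add_const_left _ _ tendsto_natCast_atTop_atTop)
  exact (hφ t ht).trans_le (ge_of_tendsto' hshift hmono)

lemma pos_of_hasDerivAt_neg_of_tendsto {p p' : ℝ → ℝ}
    (hp : ∀ t, 0 < t → HasDerivAt p (p' t) t) (hp' : ∀ t, 0 < t → p' t < 0)
    (hlim : Tendsto p atTop (𝓝 0)) {t : ℝ} (ht : 0 < t) : 0 < p t := by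
  have hanti : StrictAntiOn p (Ioi 0) := by
    refine strictAntiOn_of_deriv_neg (convex_Ioi 0)
      (fun s hs => (hp s hs).continuousAt.continuousWithinAt) fun s hs => ?_
    rw [interior_Ioi] at hs
    exact (hp s hs).deriv ▸ hp' s hs
  have hneg : Tendsto (fun s => -p s) atTop (𝓝 0) := by simpa using hlim.neg
  have := neg_of_lt_add_one_of_tendsto (φ := fun s => -p s)
    (fun s hs => neg_lt_neg (hanti hs (by simp; linarith) (lt_add_one s))) hneg ht
  simpa using this

lemma tendsto_one_div_mul_atTop {c : ℝ} (hc : 0 < c) {f : ℝ → ℝ} (hf : Tendsto f atTop atTop) :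
    Tendsto (fun t => 1 / (c * f t)) atTop (𝓝 0) :=
  tendsto_const_nhds.div_atTop (hf.const_mul_atTop hc)

lemma log_add_one_sub_log_lt {t : ℝ} (ht : 0 < t) :
    log (t + 1) - log t < 1 / (2 * t) + 1 / (2 * (t + 1)) := by
  suffices 0 < 1 / (2 * t) + 1 / (2 * (t + 1)) - (log (t + 1) - log t) by linarith
  refine pos_of_hasDerivAt_neg_of_tendsto
    (p := fun t => 1 / (2 * t) + 1 / (2 * (t + 1)) - (log (t + 1) - log t))
    (p' := fun t => -1 / (2 * t ^ 2 * (t + 1) ^ 2)) (fun t ht => ?_) (fun t ht => ?_) ?_ ht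
  · have ht1 : t + 1 ≠ 0 := by positivity
    have hsucc := (hasDerivAt_id' t).add_const 1
    have := (((hasDerivAt_const t (1 : ℝ)).div ((hasDerivAt_id' t).const_mul 2)
      (by simp; positivity)).add ((hasDerivAt_const t (1 : ℝ)).div (hsucc.const_mul 2)
      (by simp; positivity))).sub ((hsucc.log ht1).sub (hasDerivAt_log ht.ne'))
    refine this.congr_deriv ?_
    field_simp
    ring
  · have : 0 < 2 * t ^ 2 * (t + 1) ^ 2 := by positivity
    exact div_neg_of_neg_of_pos (by norm_num) this
  · have hsucc : Tendsto (fun t : ℝ => t + 1) atTop atTop :=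
      tendsto_atTop_add_const_right _ 1 tendsto_id
    simpa using ((tendsto_one_div_mul_atTop two_pos tendsto_id).add
      (tendsto_one_div_mul_atTop two_pos hsucc)).sub (tendsto_log_comp_add_sub_log 1)

lemma lt_log_add_one_sub_log {t : ℝ} (ht : 0 < t) :
    1 / (2 * t) + 1 / (2 * (t + 1)) - 1 / (12 * t ^ 2) + 1 / (12 * (t + 1) ^ 2)
      < log (t + 1) - log t := by
  suffices 0 < log (t + 1) - log t - (1 / (2 * t) + 1 / (2 * (t + 1)) - 1 / (12 * t ^ 2)
      + 1 / (12 * (t + 1) ^ 2)) by linarith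
  refine pos_of_hasDerivAt_neg_of_tendsto
    (p := fun t => log (t + 1) - log t - (1 / (2 * t) + 1 / (2 * (t + 1)) - 1 / (12 * t ^ 2)
      + 1 / (12 * (t + 1) ^ 2)))
    (p' := fun t => -1 / (6 * t ^ 3 * (t + 1) ^ 3)) (fun t ht => ?_) (fun t ht => ?_) ?_ ht
  · have ht1 : t + 1 ≠ 0 := by positivity
    have hsucc := (hasDerivAt_id' t).add_const 1
    have := ((hsucc.log ht1).sub (hasDerivAt_log ht.ne')).sub
      ((((hasDerivAt_const t (1 : ℝ)).div ((hasDerivAt_id' t).const_mul 2)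
      (by simp; positivity)).add ((hasDerivAt_const t (1 : ℝ)).div (hsucc.const_mul 2)
      (by simp; positivity))).sub
      ((hasDerivAt_const t (1 : ℝ)).div ((hasDerivAt_pow 2 t).const_mul 12) (by simp; positivity))
      |>.add ((hasDerivAt_const t (1 : ℝ)).div ((hsucc.pow 2).const_mul 12) (by simp; positivity)))
    refine this.congr_deriv ?_
    simp only [Pi.pow_apply]
    field_simp
    ring
  · have : 0 < 6 * t ^ 3 * (t + 1) ^ 3 := by positivity
    exact div_neg_of_neg_of_pos (by norm_num) this
  · have hsucc : Tendsto (fun t : ℝ => t + 1) atTop atTop :=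
      tendsto_atTop_add_const_right _ 1 tendsto_id
    have hsq := tendsto_pow_atTop (α := ℝ) two_ne_zero
    simpa using (tendsto_log_comp_add_sub_log 1).sub
      ((((tendsto_one_div_mul_atTop two_pos tendsto_id).add
        (tendsto_one_div_mul_atTop two_pos hsucc)).sub
        (tendsto_one_div_mul_atTop (by norm_num : (0 : ℝ) < 12) hsq)).add
        (tendsto_one_div_mul_atTop (by norm_num : (0 : ℝ) < 12) (hsq.comp hsucc)))

lemma log_Gamma_add_one {x : ℝ} (hx : 0 < x) : log (Gamma (x + 1)) = log (Gamma x) + log x := by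
  rw [Gamma_add_one hx.ne', log_mul hx.ne' (Gamma_pos_of_pos hx).ne', add_comm]

lemma differentiableAt_log_Gamma {x : ℝ} (hx : 0 < x) :
    DifferentiableAt ℝ (fun t => log (Gamma t)) x :=
  (differentiableAt_Gamma fun m => (neg_nonpos.mpr m.cast_nonneg).trans_lt hx |>.ne').log
    (Gamma_pos_of_pos hx).ne'

lemma psi_add_one {x : ℝ} (hx : 0 < x) : psi (x + 1) = psi x + 1 / x := by
  have hrec : (fun t => log (Gamma (t + 1))) =ᶠ[𝓝 x] fun t => log (Gamma t) + log t := by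
    filter_upwards [eventually_gt_nhds hx] with t ht using log_Gamma_add_one ht
  rw [psi, ← deriv_comp_add_const, hrec.deriv_eq,
    deriv_fun_add (differentiableAt_log_Gamma hx) (differentiableAt_log hx.ne'), deriv_log, one_div]
  rfl

lemma slope_log_Gamma_add_one {x : ℝ} (hx : 0 < x) : slope (log ∘ Gamma) x (x + 1) = log x := by
  rw [slope_def_field, Function.comp_apply, Function.comp_apply, log_Gamma_add_one hx,
    add_sub_cancel_left, add_sub_cancel_left, div_one]

lemma log_le_psi_add_one {x : ℝ} (hx : 0 < x) : log x ≤ psi (x + 1) :=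
  slope_log_Gamma_add_one hx ▸ convexOn_log_Gamma.slope_le_deriv (mem_Ioi.mpr hx)
    (mem_Ioi.mpr (by linarith)) (lt_add_one x) (differentiableAt_log_Gamma (by linarith))

lemma psi_add_one_le_log_add_one {x : ℝ} (hx : 0 < x) : psi (x + 1) ≤ log (x + 1) := by
  have hx1 : 0 < x + 1 := by linarith
  exact slope_log_Gamma_add_one hx1 ▸ convexOn_log_Gamma.deriv_le_slope (mem_Ioi.mpr hx1)
    (mem_Ioi.mpr (by linarith)) (lt_add_one (x + 1)) (differentiableAt_log_Gamma hx1)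

lemma tendsto_psi_add_one_sub_log : Tendsto (fun x => psi (x + 1) - log x) atTop (𝓝 0) := by
  refine tendsto_of_tendsto_of_tendsto_of_le_of_le' tendsto_const_nhds
    (tendsto_log_comp_add_sub_log 1) ?_ ?_
  · filter_upwards [eventually_gt_atTop 0] with x hx using sub_nonneg.mpr (log_le_psi_add_one hx)
  · filter_upwards [eventually_gt_atTop 0] with x hx using
      sub_le_sub_right (psi_add_one_le_log_add_one hx) _

theorem psi_log_bounds (x : ℝ) (hx : 0 < x) :
    1/(2*x) - 1/(12*x^2) < psi (x + 1) - Real.log x ∧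
      psi (x + 1) - Real.log x < 1/(2*x) := by
  have hstep : ∀ t, 0 < t →
      psi (t + 1 + 1) = psi (t + 1) + 1 / (2 * (t + 1)) + 1 / (2 * (t + 1)) := by
    intro t ht
    rw [psi_add_one (by positivity)]
    field_simp
    ring
  have hhalf := tendsto_one_div_mul_atTop two_pos tendsto_id
  constructor
  · have := neg_of_lt_add_one_of_tendsto
      (φ := fun t => 1 / (2 * t) - 1 / (12 * t ^ 2) - (psi (t + 1) - log t))
      (fun t ht => by linarith [hstep t ht, lt_log_add_one_sub_log ht])
      (by simpa using (hhalf.sub (tendsto_one_div_mul_atTop (by norm_num : (0 : ℝ) < 12)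
        (tendsto_pow_atTop two_ne_zero))).sub tendsto_psi_add_one_sub_log) hx
    linarith
  · have := neg_of_lt_add_one_of_tendsto (φ := fun t => psi (t + 1) - log t - 1 / (2 * t))
      (fun t ht => by linarith [hstep t ht, log_add_one_sub_log_lt ht])
      (by simpa using tendsto_psi_add_one_sub_log.sub hhalf) hx
    linarith
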